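/- Let μ be a probability measure on [0, 2π], n ≥ 2, and 0 < λ ≤ 4/3. Define a_k = (2/k)·∫₀^{2π} e^{i(k-1)θ} dμ(θ) for k ≥ 2. Then |λ·a_n² − a_{2n-1}| ≤ 2/(2n-1). -/

import Mathlib

/-!
With `f θ = e^{i(n-1)θ}`, `c = ∫ f dμ` and `d = ∫ f² dμ` we have `a_n = 2c/n` and
`a_{2n-1} = 2d/(2n-1)`, so `λ a_n² - a_{2n-1} = (2/(2n-1)) (t c² - d)` with
`t = 2λ(2n-1)/n² ∈ [0, 2]`. Since `|f| = 1`, centring at the mean gives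
`|d - c²| = |∫ (f - c)² dμ| ≤ ∫ |f - c|² dμ = 1 - |c|²`, and therefore
`|t c² - d| ≤ |t - 1| |c|² + (1 - |c|²) ≤ 1`.
-/

open MeasureTheory Real

section Variance

variable {α E : Type*} [MeasurableSpace α] {μ : Measure α} [IsProbabilityMeasure μ]
  [NormedAddCommGroup E] [InnerProductSpace ℝ E] [CompleteSpace E]

theorem integral_norm_sub_integral_sq {f : α → E} (hf : MemLp f 2 μ) :
    ∫ x, ‖f x - ∫ y, f y ∂μ‖ ^ 2 ∂μ = ∫ x, ‖f x‖ ^ 2 ∂μ - ‖∫ x, f x ∂μ‖ ^ 2 := by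
  set c := ∫ y, f y ∂μ
  have hf1 : Integrable f μ := hf.integrable one_le_two
  have hf2 : Integrable (fun x => ‖f x‖ ^ 2) μ := hf.integrable_norm_pow two_ne_zero
  have expand : ∀ x, ‖f x - c‖ ^ 2 = ‖f x‖ ^ 2 - 2 * inner ℝ c (f x) + ‖c‖ ^ 2 := fun x => by
    rw [norm_sub_sq_real, real_inner_comm]
  have hinner : Integrable (fun x => 2 * inner ℝ c (f x)) μ := (hf1.const_inner c).const_mul 2
  have hdiff : Integrable (fun x => ‖f x‖ ^ 2 - 2 * inner ℝ c (f x)) μ := hf2.sub hinner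
  simp_rw [expand]
  rw [integral_add hdiff (integrable_const _), integral_sub hf2 hinner, integral_const_mul,
    integral_inner hf1, real_inner_self_eq_norm_sq, integral_const]
  simp only [probReal_univ, one_smul]
  ring

theorem norm_integral_sq_sub_integral_sq_le {f : α → ℂ} (hf : MemLp f 2 μ) :
    ‖∫ x, f x ^ 2 ∂μ - (∫ x, f x ∂μ) ^ 2‖ ≤ ∫ x, ‖f x‖ ^ 2 ∂μ - ‖∫ x, f x ∂μ‖ ^ 2 := by
  set c := ∫ y, f y ∂μ
  have hf1 : Integrable f μ := hf.integrable one_le_two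
  have hsq : Integrable (fun x => f x ^ 2) μ :=
    (hf.integrable_norm_pow two_ne_zero).mono' (hf.1.pow 2) (by simp)
  have centre : ∫ x, f x ^ 2 ∂μ - c ^ 2 = ∫ x, (f x - c) ^ 2 ∂μ := by
    have hcross : Integrable (fun x => 2 * f x * c) μ := (hf1.const_mul 2).mul_const c
    have hdiff : Integrable (fun x => f x ^ 2 - 2 * f x * c) μ := hsq.sub hcross
    simp_rw [sub_sq]
    rw [integral_add hdiff (integrable_const _), integral_sub hsq hcross, integral_mul_const,
      integral_const_mul, integral_const]
    simp only [probReal_univ, one_smul]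
    ring
  calc ‖∫ x, f x ^ 2 ∂μ - c ^ 2‖ = ‖∫ x, (f x - c) ^ 2 ∂μ‖ := by rw [centre]
    _ ≤ ∫ x, ‖f x - c‖ ^ 2 ∂μ :=
      (norm_integral_le_integral_norm _).trans_eq (by simp only [norm_pow])
    _ = ∫ x, ‖f x‖ ^ 2 ∂μ - ‖c‖ ^ 2 := integral_norm_sub_integral_sq hf

theorem norm_integral_sq_sub_integral_sq_le_of_norm_eq_one {f : α → ℂ}
    (hf : AEStronglyMeasurable f μ) (hf_norm : ∀ x, ‖f x‖ = 1) :
    ‖∫ x, f x ^ 2 ∂μ - (∫ x, f x ∂μ) ^ 2‖ ≤ 1 - ‖∫ x, f x ∂μ‖ ^ 2 := by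
  simpa [hf_norm] using
    norm_integral_sq_sub_integral_sq_le (MemLp.of_bound hf 1 (by simp [hf_norm]))

end Variance


theorem norm_ofReal_mul_sq_sub_le_one {c d : ℂ} {t : ℝ} (ht₀ : 0 ≤ t) (ht₂ : t ≤ 2)
    (hd : ‖d - c ^ 2‖ ≤ 1 - ‖c‖ ^ 2) : ‖(t : ℂ) * c ^ 2 - d‖ ≤ 1 :=
  calc ‖(t : ℂ) * c ^ 2 - d‖ = ‖((t - 1 : ℝ) : ℂ) * c ^ 2 - (d - c ^ 2)‖ := by
        push_cast; ring_nf
    _ ≤ |t - 1| * ‖c‖ ^ 2 + (1 - ‖c‖ ^ 2) := by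
        refine (norm_sub_le _ _).trans (add_le_add (le_of_eq ?_) hd)
        rw [norm_mul, norm_pow, Complex.norm_real, Real.norm_eq_abs]
    _ ≤ 1 := by
        nlinarith [abs_le.2 (⟨by linarith, by linarith⟩ : -1 ≤ t - 1 ∧ t - 1 ≤ 1), sq_nonneg ‖c‖]

theorem two_mul_mul_two_mul_sub_one_div_sq_le_two {lam x : ℝ} (hlam : lam ≤ 4 / 3) (hx : 2 ≤ x) :
    2 * lam * (2 * x - 1) / x ^ 2 ≤ 2 := by
  rw [div_le_iff₀ (by positivity)]
  nlinarith [mul_nonneg (by linarith : (0 : ℝ) ≤ 3 * x - 2) (by linarith : (0 : ℝ) ≤ x - 2),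
    mul_nonneg (by linarith : (0 : ℝ) ≤ 4 / 3 - lam) (by linarith : (0 : ℝ) ≤ 2 * x - 1)]

theorem zalcman_stmt_10_general (μ : Measure ℝ) [IsProbabilityMeasure μ]
    (n : ℕ) (hn : 2 ≤ n) (lam : ℝ) (hlam : 0 < lam) (hlam' : lam ≤ 4 / 3)
    (a : ℕ → ℂ)
    (ha : ∀ k : ℕ, 2 ≤ k →
      a k = (2 / (k : ℂ)) * ∫ θ, Complex.exp (Complex.I * ((k : ℂ) - 1) * (θ : ℂ)) ∂μ) :
    ‖(lam : ℂ) * (a n) ^ 2 - a (2 * n - 1)‖ ≤ 2 / (2 * (n : ℝ) - 1) := by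
  set f : ℝ → ℂ := fun θ => Complex.exp (Complex.I * ((n : ℂ) - 1) * θ)
  set c := ∫ θ, f θ ∂μ
  set d := ∫ θ, f θ ^ 2 ∂μ
  have hvar : ‖d - c ^ 2‖ ≤ 1 - ‖c‖ ^ 2 :=
    norm_integral_sq_sub_integral_sq_le_of_norm_eq_one
      (by fun_prop : Continuous f).aestronglyMeasurable fun θ => by simp [f, Complex.norm_exp]
  have ha2n : a (2 * n - 1) = 2 / (2 * n - 1) * d := by
    rw [ha _ (by omega), Nat.cast_sub (by omega)]
    push_cast
    congr 2 with θ
    rw [← Complex.exp_nat_mul]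
    ring_nf
  have hnR : (2 : ℝ) ≤ n := by exact_mod_cast hn
  have h2n : (0 : ℝ) < 2 * n - 1 := by linarith
  set t : ℝ := 2 * lam * (2 * n - 1) / n ^ 2
  have ht₀ : 0 ≤ t := by positivity
  have ht₂ : t ≤ 2 := two_mul_mul_two_mul_sub_one_div_sq_le_two hlam' hnR
  have hsplit :
      (lam : ℂ) * a n ^ 2 - a (2 * n - 1) = (2 / (2 * n - 1) : ℝ) * (t * c ^ 2 - d) := by
    have han : a n = 2 / n * c := ha n hn
    have h2n_ne : (2 * n - 1 : ℂ) ≠ 0 := by exact_mod_cast h2n.ne'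
    rw [han, ha2n]
    push_cast [t]
    field_simp
  rw [hsplit, norm_mul, Complex.norm_real, Real.norm_of_nonneg (by positivity)]
  exact mul_le_of_le_one_right (by positivity) (norm_ofReal_mul_sq_sub_le_one ht₀ ht₂ hvar)

theorem zalcman_stmt_10 (μ : Measure ℝ) [IsProbabilityMeasure μ]
    (hsupp : μ (Set.Icc (0 : ℝ) (2 * π))ᶜ = 0)
    (n : ℕ) (hn : 2 ≤ n) (lam : ℝ) (hlam : 0 < lam) (hlam' : lam ≤ 4 / 3)
    (a : ℕ → ℂ)
    (ha : ∀ k : ℕ, 2 ≤ k →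
      a k = (2 / (k : ℂ)) * ∫ θ, Complex.exp (Complex.I * ((k : ℂ) - 1) * (θ : ℂ)) ∂μ) :
    ‖(lam : ℂ) * (a n) ^ 2 - a (2 * n - 1)‖ ≤ 2 / (2 * (n : ℝ) - 1) :=
  zalcman_stmt_10_general μ n hn lam hlam hlam' a ha
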